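/- arXiv:2501.16195 — 2 statements merged into one kernel-verified Lean document; each statement's English description precedes it below -/
import Mathlib

section
/- For every λ ∈ ℂ, the function ū₊(x; λ) = e^{−√(2+λ)·x} · (1 + (2/3)λ + tanh²((√2/2)x) + 2√(1 + λ/2)·tanh((√2/2)x)) solves the linearized eigenvalue equation ū'' + (1 − 3 tanh²((√2/2)x) − λ)ū = 0. -/
open Real Complex

/-- The Jost solution `ū₊(x;λ)`. Square roots are taken with the principal branch of
the complex power. -/
noncomputable def ubarPlus (lam : ℂ) (x : ℝ) : ℂ :=
  Complex.exp (-((2 + lam) ^ ((1 : ℂ) / 2)) * (x : ℂ)) *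
    (1 + (2 / 3) * lam + ((Real.tanh (Real.sqrt 2 / 2 * x) : ℝ) : ℂ) ^ 2
      + 2 * ((1 + lam / 2) ^ ((1 : ℂ) / 2)) * ((Real.tanh (Real.sqrt 2 / 2 * x) : ℝ) : ℂ))

private lemma tanh_hasDerivAt (y : ℝ) : HasDerivAt Real.tanh (1 - Real.tanh y ^ 2) y := by
  have hc : Real.cosh y ≠ 0 := (Real.cosh_pos y).ne'
  have h := (Real.hasDerivAt_sinh y).div (Real.hasDerivAt_cosh y) hc
  have heq : Real.tanh = fun x => Real.sinh x / Real.cosh x := by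
    funext x; exact Real.tanh_eq_sinh_div_cosh x
  rw [heq]
  refine h.congr_deriv ?_
  field_simp

private lemma hT (x : ℝ) :
    HasDerivAt (fun x : ℝ => ((Real.tanh (Real.sqrt 2 / 2 * x) : ℝ) : ℂ))
      ((Real.sqrt 2 : ℂ) / 2 * (1 - ((Real.tanh (Real.sqrt 2 / 2 * x) : ℝ) : ℂ) ^ 2)) x := by
  have h1 : HasDerivAt (fun x : ℝ => Real.tanh (Real.sqrt 2 / 2 * x))
      ((1 - Real.tanh (Real.sqrt 2 / 2 * x) ^ 2) * (Real.sqrt 2 / 2)) x := by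
    exact (tanh_hasDerivAt (Real.sqrt 2 / 2 * x)).comp x
      (by simpa using (hasDerivAt_id x).const_mul (Real.sqrt 2 / 2))
  have h2 := h1.ofReal_comp
  convert h2 using 1
  push_cast; ring

private lemma hE (μ : ℂ) (x : ℝ) :
    HasDerivAt (fun x : ℝ => Complex.exp (-μ * (x : ℂ))) (-μ * Complex.exp (-μ * (x : ℂ))) x := by
  have h0 : HasDerivAt (fun x : ℝ => -μ * (x : ℂ)) (-μ) x := by
    simpa using (Complex.ofRealCLM.hasDerivAt (x := x)).const_mul (-μ)
  simpa [mul_comm] using h0.cexp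


private lemma cpow_half_sq {z : ℂ} : (z ^ ((1:ℂ)/2)) ^ 2 = z := by
  by_cases h : z = 0
  · rw [h, Complex.zero_cpow (by norm_num)]; ring
  · rw [sq, ← Complex.cpow_add _ _ h]
    norm_num

private lemma sqrt_branch (lam : ℂ) :
    (Real.sqrt 2 : ℂ) * (2 + lam) ^ ((1:ℂ)/2) = 2 * (1 + lam/2) ^ ((1:ℂ)/2) := by
  by_cases h : (1 : ℂ) + lam / 2 = 0
  · have h2 : (2 : ℂ) + lam = 0 := by linear_combination 2 * h
    rw [h, h2, Complex.zero_cpow (by norm_num), mul_zero, mul_zero]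
  · have h2 : (2 : ℂ) + lam = ((2:ℝ) : ℂ) * (1 + lam / 2) := by push_cast; ring
    have hne : ((2:ℝ) : ℂ) * (1 + lam / 2) ≠ 0 := by
      apply mul_ne_zero _ h; norm_num
    rw [h2, Complex.cpow_def_of_ne_zero hne, Complex.cpow_def_of_ne_zero h,
        Complex.log_ofReal_mul two_pos h]
    have hs : (Real.sqrt 2 : ℂ) = Complex.exp (((Real.log 2 / 2 : ℝ)) : ℂ) := by
      rw [← Complex.ofReal_exp]
      norm_cast
      rw [Real.sqrt_eq_rpow, Real.rpow_def_of_pos two_pos]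
      ring_nf
    rw [hs, ← Complex.exp_add,
        show (((Real.log 2 / 2 : ℝ)) : ℂ) + (((Real.log 2 : ℝ)) + Complex.log (1 + lam/2)) * ((1:ℂ)/2)
          = (((Real.log 2 : ℝ)) : ℂ) + Complex.log (1 + lam/2) * ((1:ℂ)/2) by push_cast; ring,
        Complex.exp_add, ← Complex.ofReal_exp, Real.exp_log two_pos]
    norm_num

section Main

variable (lam : ℂ)

noncomputable def tc (x : ℝ) : ℂ := ((Real.tanh (Real.sqrt 2 / 2 * x) : ℝ) : ℂ)

noncomputable def muC : ℂ := (2 + lam) ^ ((1:ℂ)/2)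
noncomputable def nuC : ℂ := (1 + lam / 2) ^ ((1:ℂ)/2)

noncomputable def U1 (x : ℝ) : ℂ :=
  Complex.exp (-muC lam * (x : ℂ)) *
    (-muC lam * (1 + (2/3) * lam + tc x ^ 2 + 2 * nuC lam * tc x)
      + (2 * tc x + 2 * nuC lam) * ((Real.sqrt 2 : ℂ) / 2 * (1 - tc x ^ 2)))

private lemma hstep1 (y : ℝ) : HasDerivAt (ubarPlus lam) (U1 lam y) y := by
  have ht := hT y
  have hP : HasDerivAt
      (fun y : ℝ => 1 + (2/3) * lam + tc y ^ 2 + 2 * nuC lam * tc y)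
      (2 * tc y * ((Real.sqrt 2 : ℂ) / 2 * (1 - tc y ^ 2))
        + 2 * nuC lam * ((Real.sqrt 2 : ℂ) / 2 * (1 - tc y ^ 2))) y := by
    have hfun : (fun y : ℝ => tc y ^ 2) = fun y => tc y * tc y := by funext y; ring
    have h_sq : HasDerivAt (fun y : ℝ => tc y ^ 2)
        (2 * tc y * ((Real.sqrt 2 : ℂ) / 2 * (1 - tc y ^ 2))) y := by
      rw [hfun]
      refine (ht.mul ht).congr_deriv ?_
      simp only [tc]; ring
    have h_lin := ht.const_mul (2 * nuC lam)
    have := (h_sq.const_add (1 + (2/3) * lam)).add h_lin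
    exact this
  have := (hE (muC lam) y).mul hP
  have hub : ubarPlus lam = fun y : ℝ =>
      Complex.exp (-muC lam * (y : ℂ)) * (1 + (2/3) * lam + tc y ^ 2 + 2 * nuC lam * tc y) := by
    funext y; simp [ubarPlus, muC, nuC, tc]
  rw [hub]
  refine this.congr_deriv ?_
  simp only [U1]
  ring

private lemma hstep2 (x : ℝ) : HasDerivAt (U1 lam)
    (-muC lam * Complex.exp (-muC lam * (x : ℂ)) *
      (-muC lam * (1 + (2/3) * lam + tc x ^ 2 + 2 * nuC lam * tc x)
        + (2 * tc x + 2 * nuC lam) * ((Real.sqrt 2 : ℂ) / 2 * (1 - tc x ^ 2)))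
     + Complex.exp (-muC lam * (x : ℂ)) *
      (-muC lam * (2 * tc x * ((Real.sqrt 2 : ℂ) / 2 * (1 - tc x ^ 2))
          + 2 * nuC lam * ((Real.sqrt 2 : ℂ) / 2 * (1 - tc x ^ 2)))
        + ((2 * ((Real.sqrt 2 : ℂ) / 2 * (1 - tc x ^ 2))) * ((Real.sqrt 2 : ℂ) / 2 * (1 - tc x ^ 2))
          + (2 * tc x + 2 * nuC lam) *
            ((Real.sqrt 2 : ℂ) / 2 * (-(2 * tc x * ((Real.sqrt 2 : ℂ) / 2 * (1 - tc x ^ 2))))))))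
    x := by
  have ht := hT x
  have hfun : (fun y : ℝ => tc y ^ 2) = fun y => tc y * tc y := by funext y; ring
  have h_sq : HasDerivAt (fun y : ℝ => tc y ^ 2)
      (2 * tc x * ((Real.sqrt 2 : ℂ) / 2 * (1 - tc x ^ 2))) x := by
    rw [hfun]
    refine (ht.mul ht).congr_deriv ?_
    simp only [tc]; ring
  have hP : HasDerivAt
      (fun y : ℝ => 1 + (2/3) * lam + tc y ^ 2 + 2 * nuC lam * tc y)
      (2 * tc x * ((Real.sqrt 2 : ℂ) / 2 * (1 - tc x ^ 2))
        + 2 * nuC lam * ((Real.sqrt 2 : ℂ) / 2 * (1 - tc x ^ 2))) x := by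
    have h_lin := ht.const_mul (2 * nuC lam)
    have := (h_sq.const_add (1 + (2/3) * lam)).add h_lin
    exact this
  have hD : HasDerivAt (fun y : ℝ => 2 * tc y + 2 * nuC lam)
      (2 * ((Real.sqrt 2 : ℂ) / 2 * (1 - tc x ^ 2))) x :=
    (ht.const_mul 2).add_const (2 * nuC lam)
  have hS : HasDerivAt (fun y : ℝ => (Real.sqrt 2 : ℂ) / 2 * (1 - tc y ^ 2))
      ((Real.sqrt 2 : ℂ) / 2 * (-(2 * tc x * ((Real.sqrt 2 : ℂ) / 2 * (1 - tc x ^ 2))))) x := by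
    have h1 : HasDerivAt (fun y : ℝ => (1 : ℂ) - tc y ^ 2)
        (-(2 * tc x * ((Real.sqrt 2 : ℂ) / 2 * (1 - tc x ^ 2)))) x := by
      have := h_sq.const_sub 1
      exact this
    exact h1.const_mul _
  have hQ := (hP.const_mul (-muC lam)).add (hD.mul hS)
  have := (hE (muC lam) x).mul hQ
  have hu1 : U1 lam = fun y : ℝ =>
      Complex.exp (-muC lam * (y : ℂ)) *
        ((fun y : ℝ => -muC lam * (1 + (2/3) * lam + tc y ^ 2 + 2 * nuC lam * tc y)
          + (2 * tc y + 2 * nuC lam) * ((Real.sqrt 2 : ℂ) / 2 * (1 - tc y ^ 2))) y) := by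
    funext y; simp [U1]
  rw [hu1]
  exact this

end Main

/-- For every `λ ∈ ℂ`, the Jost function `ū₊(·;λ)` solves the linearized eigenvalue
equation `ū'' + (1 − 3 tanh²((√2/2)x) − λ)ū = 0`. -/
theorem jost_solution (lam : ℂ) (x : ℝ) :
    deriv (deriv (ubarPlus lam)) x
      + (1 - 3 * ((Real.tanh (Real.sqrt 2 / 2 * x) : ℝ) : ℂ) ^ 2 - lam) * ubarPlus lam x
      = 0 := by
  have hd1 : deriv (ubarPlus lam) = U1 lam := funext fun y => (hstep1 lam y).deriv
  rw [hd1, (hstep2 lam x).deriv]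
  have hub : ubarPlus lam x = Complex.exp (-muC lam * (x : ℂ)) *
      (1 + (2/3) * lam + tc x ^ 2 + 2 * nuC lam * tc x) := by
    simp [ubarPlus, muC, nuC, tc]
  have htt : ((Real.tanh (Real.sqrt 2 / 2 * x) : ℝ) : ℂ) = tc x := rfl
  rw [hub, htt]
  set E := Complex.exp (-muC lam * (x : ℂ))
  set t := tc x
  set μ := muC lam
  set ν := nuC lam
  set q := (Real.sqrt 2 : ℂ)
  have hμ : μ ^ 2 = 2 + lam := cpow_half_sq
  have hν : ν ^ 2 = 1 + lam / 2 := cpow_half_sq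
  have h3 : q * μ = 2 * ν := sqrt_branch lam
  have hq : q ^ 2 = 2 := by
    have : ((Real.sqrt 2 : ℝ) : ℂ) ^ 2 = ((2 : ℝ) : ℂ) := by
      norm_cast
      exact Real.sq_sqrt (by norm_num)
    simpa [q] using this
  linear_combination
    (E * (1 + (2/3) * lam + t ^ 2 + 2 * ν * t)) * hμ
    - 4 * E * (1 - t ^ 2) * hν
    - E * (2 * t + 2 * ν) * (1 - t ^ 2) * h3
    + (E * (1 - t ^ 2) * ((1 - t ^ 2) - t * (2 * t + 2 * ν)) / 2) * hq
end

section
/- With f₁(x) = α₁cos(kx), f₂(x) ≡ 0, f₃(x) ≡ 0 and k ≠ 0, the Melnikov integral R_up(φ) = ∫_{−∞}^{∞} α₁ cos(kx)·u_up(x; φ)·u_up'(x; φ) dx equals −(α₁ k² π)/(sinh(kπ/√2))·sin(kφ), where u_up(x; φ) = tanh((√2/2)(x − φ)). In particular R_up(φ) = 0 precisely when kφ is an integer multiple of π. -/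
open Real Filter Topology MeasureTheory

lemma tanh_hasDerivAt_s11 (x : ℝ) : HasDerivAt Real.tanh (1 / Real.cosh x ^ 2) x := by
  have h := (Real.hasDerivAt_sinh x).div (Real.hasDerivAt_cosh x) (Real.cosh_pos x).ne'
  have e : Real.tanh = fun y => Real.sinh y / Real.cosh y :=
    funext fun y => Real.tanh_eq_sinh_div_cosh y
  rw [e]
  refine h.congr_deriv ?_
  rw [show Real.cosh x * Real.cosh x - Real.sinh x * Real.sinh x = 1 by
    nlinarith [Real.cosh_sq_sub_sinh_sq x]]

lemma one_add_tanh (u : ℝ) : 1 + Real.tanh u = Real.exp u / Real.cosh u := by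
  rw [Real.tanh_eq_sinh_div_cosh, ← Real.cosh_add_sinh]
  field_simp [(Real.cosh_pos u).ne']

lemma one_sub_tanh (u : ℝ) : 1 - Real.tanh u = Real.exp (-u) / Real.cosh u := by
  rw [Real.tanh_eq_sinh_div_cosh, ← Real.cosh_sub_sinh]
  field_simp [(Real.cosh_pos u).ne']

lemma tanh_lt_one' (u : ℝ) : Real.tanh u < 1 := by
  have h := one_sub_tanh u
  have := div_pos (Real.exp_pos (-u)) (Real.cosh_pos u)
  linarith

lemma neg_one_lt_tanh' (u : ℝ) : -1 < Real.tanh u := by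
  have h := one_add_tanh u
  have := div_pos (Real.exp_pos u) (Real.cosh_pos u)
  linarith

lemma tanh_ratio (u : ℝ) : (1 + Real.tanh u) / (1 - Real.tanh u) = Real.exp (2*u) := by
  rw [one_add_tanh, one_sub_tanh, div_div_div_cancel_right₀]
  · rw [← Real.exp_sub]; ring_nf
  · exact (Real.cosh_pos u).ne'


lemma tanh_strictMono : StrictMono Real.tanh := by
  apply strictMono_of_deriv_pos
  intro x
  rw [(tanh_hasDerivAt_s11 x).deriv]
  positivity

lemma tanh_surjOn {t : ℝ} (h1 : -1 < t) (h2 : t < 1) : ∃ u, Real.tanh u = t := by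
  refine ⟨Real.log ((1+t)/(1-t)) / 2, ?_⟩
  set u := Real.log ((1+t)/(1-t)) / 2 with hu
  have hr : Real.exp (2*u) = (1+t)/(1-t) := by
    rw [hu, mul_div_cancel₀ _ (two_ne_zero : (2:ℝ) ≠ 0), Real.exp_log]
    have h1 : (0:ℝ) < 1 + t := by linarith
    have h2 : (0:ℝ) < 1 - t := by linarith
    positivity
  have h := tanh_ratio u
  rw [hr] at h
  have hT1 : 1 - Real.tanh u > 0 := by linarith [tanh_lt_one' u]
  have ht1 : 1 - t > 0 := by linarith
  have := div_eq_div_iff hT1.ne' ht1.ne' |>.mp h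
  nlinarith

lemma range_f {c : ℝ} (hc : c ≠ 0) :
    Set.range (fun y => (1 + Real.tanh (c*y))/2) = Set.Ioo (0:ℝ) 1 := by
  ext x
  constructor
  · rintro ⟨y, rfl⟩
    exact ⟨by linarith [neg_one_lt_tanh' (c*y)], by linarith [tanh_lt_one' (c*y)]⟩
  · rintro ⟨hx0, hx1⟩
    obtain ⟨u, hu⟩ := tanh_surjOn (t := 2*x-1) (by linarith) (by linarith)
    refine ⟨u/c, ?_⟩
    show (1 + Real.tanh (c * (u/c)))/2 = x
    rw [mul_div_cancel₀ _ hc, hu]; ring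

lemma sech_sq_le {c : ℝ} (hc : 1/2 ≤ c) (y : ℝ) :
    1 / Real.cosh (c*y) ^ 2 ≤ 16 * (1 + y^2)⁻¹ := by
  have h1 : Real.exp |c*y| / 2 ≤ Real.cosh (c*y) := by
    rw [← Real.cosh_abs, Real.cosh_eq]
    have := Real.exp_pos (-|c*y|)
    linarith
  have h2 : 1 + |c*y| ≤ Real.exp |c*y| := by linarith [Real.add_one_le_exp |c*y|]
  have h3 : |c*y| = c * |y| := by
    rw [abs_mul, abs_of_nonneg (by linarith : (0:ℝ) ≤ c)]
  have h4 : (1 + y^2) / 16 ≤ Real.cosh (c*y) ^ 2 := by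
    have he : (1 + c*|y|)^2 ≤ (Real.exp |c*y|)^2 := by
      apply pow_le_pow_left₀ (by positivity) (h3 ▸ h2)
    have hy : |y|^2 = y^2 := sq_abs y
    have hcy : c * |y| ≥ |y|/2 := by
      have : |y| ≥ 0 := abs_nonneg y
      nlinarith
    nlinarith [abs_nonneg y, Real.exp_pos |c*y|]
  rw [div_le_iff₀ (by positivity)]
  have h5 : (0:ℝ) < 1 + y^2 := by positivity
  rw [show (16:ℝ) * (1+y^2)⁻¹ * Real.cosh (c*y)^2 = (16 * Real.cosh (c*y)^2) / (1+y^2) by ring,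
    one_le_div h5]
  linarith


lemma re_aux (a : ℝ) : (↑a * Complex.I).re = 0 := by simp

lemma beta_combo (a : ℝ) (ha : a ≠ 0) :
    2 * Complex.betaIntegral (2 + a*Complex.I) (1 - a*Complex.I)
      - Complex.betaIntegral (1 + a*Complex.I) (1 - a*Complex.I)
    = Complex.I * (↑(a^2) * ↑Real.pi / ↑(Real.sinh (Real.pi * a))) := by
  set z : ℂ := ↑a * Complex.I with hz
  have hz0 : z ≠ 0 := by
    simp [hz, Complex.ext_iff, ha]
  have h1z : (1 : ℂ) + z ≠ 0 := by
    intro h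
    have := congrArg Complex.re h
    simp [hz] at this
  have hG2 : Complex.Gamma 2 = 1 := by
    rw [show (2:ℂ) = 1 + 1 by norm_num, Complex.Gamma_add_one _ one_ne_zero,
      Complex.Gamma_one, mul_one]
  have hB1 : Complex.betaIntegral (1 + z) (1 - z)
      = Complex.Gamma (1 + z) * Complex.Gamma (1 - z) := by
    have := Complex.Gamma_mul_Gamma_eq_betaIntegral
      (s := 1 + z) (t := 1 - z) (by simp [hz]) (by simp [hz])
    rw [show (1:ℂ) + z + (1 - z) = 2 by ring, hG2, one_mul] at this
    exact this.symm
  have hB2 : Complex.betaIntegral (2 + z) (1 - z)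
      = Complex.Gamma (2 + z) * Complex.Gamma (1 - z) / 2 := by
    have := Complex.Gamma_mul_Gamma_eq_betaIntegral
      (s := 2 + z) (t := 1 - z) (by simp [hz]) (by simp [hz])
    rw [show (2:ℂ) + z + (1 - z) = 2 + 1 by ring, Complex.Gamma_add_one 2 (by norm_num),
      hG2, mul_one] at this
    rw [eq_div_iff (two_ne_zero), mul_comm _ (2:ℂ), ← this]
  have hG3 : Complex.Gamma (2 + z) = (1 + z) * Complex.Gamma (1 + z) := by
    rw [show (2:ℂ) + z = (1 + z) + 1 by ring, Complex.Gamma_add_one _ h1z]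
  have hG4 : Complex.Gamma (1 + z) = z * Complex.Gamma z := by
    rw [show (1:ℂ) + z = z + 1 by ring, Complex.Gamma_add_one _ hz0]
  have hrefl : Complex.Gamma z * Complex.Gamma (1 - z) = ↑Real.pi / Complex.sin (↑Real.pi * z) := by
    exact Complex.Gamma_mul_Gamma_one_sub z
  have hsin : Complex.sin (↑Real.pi * z) = ↑(Real.sinh (Real.pi * a)) * Complex.I := by
    rw [hz, show (↑Real.pi : ℂ) * (↑a * Complex.I) = ↑(Real.pi * a) * Complex.I by push_cast; ring,
      Complex.sin_mul_I, Complex.ofReal_sinh]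
  have hsinh0 : Real.sinh (Real.pi * a) ≠ 0 := by
    rw [Real.sinh_ne_zero]
    exact mul_ne_zero Real.pi_ne_zero ha
  rw [hB1, hB2, hG3, hG4]
  rw [show 2 * ((1+z) * (z * Complex.Gamma z) * Complex.Gamma (1-z) / 2)
      - z * Complex.Gamma z * Complex.Gamma (1-z)
      = z * z * (Complex.Gamma z * Complex.Gamma (1-z)) by ring, hrefl, hsin, hz]
  have hI : Complex.I ≠ 0 := Complex.I_ne_zero
  have : (↑(Real.sinh (Real.pi * a)) : ℂ) ≠ 0 := by
    exact_mod_cast Complex.ofReal_ne_zero.mpr hsinh0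
  field_simp
  push_cast
  ring_nf


noncomputable def gbeta (a : ℝ) : ℝ → ℂ := fun x =>
  (x:ℂ) ^ (↑a * Complex.I) * ((1:ℂ) - ↑x) ^ (-(↑a * Complex.I)) * (2*↑x - 1)

-- evaluation of g at f y
lemma g_comp (c a y : ℝ) (hc : 0 < c) :
    gbeta a ((1 + Real.tanh (c*y))/2)
      = Complex.exp (↑(2*c*a*y) * Complex.I) * ↑(Real.tanh (c*y)) := by
  set t := Real.tanh (c*y) with ht
  have ht1 : t < 1 := tanh_lt_one' _
  have ht2 : -1 < t := neg_one_lt_tanh' _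
  set x := (1 + t)/2 with hx
  have hx0 : (0:ℝ) < x := by rw [hx]; linarith
  have hx1 : x < 1 := by rw [hx]; linarith
  have hx1' : (0:ℝ) < 1 - x := by linarith
  have hcx : ((x:ℝ):ℂ) ≠ 0 := by exact_mod_cast hx0.ne'
  have hcx1 : ((1:ℂ) - ↑x) ≠ 0 := by
    rw [show ((1:ℂ) - ↑x) = ((1 - x : ℝ) : ℂ) by push_cast; ring]
    exact_mod_cast hx1'.ne'
  have e1 : ((x:ℝ):ℂ) ^ (↑a * Complex.I)
      = Complex.exp (↑(Real.log x) * (↑a * Complex.I)) := by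
    rw [Complex.cpow_def_of_ne_zero hcx, Complex.ofReal_log hx0.le]
  have e2 : ((1:ℂ) - ↑x) ^ (-(↑a * Complex.I))
      = Complex.exp (↑(Real.log (1-x)) * (-(↑a * Complex.I))) := by
    rw [show ((1:ℂ) - ↑x) = ((1 - x : ℝ) : ℂ) by push_cast; ring,
      Complex.cpow_def_of_ne_zero (by exact_mod_cast hx1'.ne'), Complex.ofReal_log hx1'.le]
  have hratio : x / (1 - x) = Real.exp (2*(c*y)) := by
    have h2 : (1+t)/2/((1-t)/2) = (1+t)/(1-t) := by
      have hne : (1:ℝ) - t ≠ 0 := by linarith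
      field_simp
    rw [hx, show (1:ℝ) - (1+t)/2 = (1-t)/2 by ring, h2, ht, tanh_ratio]
  have hlog : Real.log x - Real.log (1-x) = 2*c*y := by
    rw [← Real.log_div hx0.ne' hx1'.ne', hratio, Real.log_exp]; ring
  have e3 : (2 * (↑x:ℂ) - 1) = ↑t := by
    rw [hx]; push_cast; ring
  rw [gbeta, e1, e2, e3, ← Complex.exp_add]
  congr 1
  rw [show (↑(Real.log x) * (↑a * Complex.I) + ↑(Real.log (1-x)) * -(↑a * Complex.I))
      = ↑(Real.log x - Real.log (1-x)) * (↑a * Complex.I) by push_cast; ring, hlog]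
  push_cast; ring

lemma f_hasDerivAt (c : ℝ) (y : ℝ) :
    HasDerivAt (fun y => (1 + Real.tanh (c*y))/2)
      (c/2 * (1 / Real.cosh (c*y) ^ 2)) y := by
  have h1 : HasDerivAt (fun y : ℝ => c * y) c y := by
    simpa using (hasDerivAt_id y).const_mul c
  have h2 := (tanh_hasDerivAt_s11 (c*y)).comp y h1
  have h3 := (h2.const_add (1:ℝ)).div_const 2
  refine h3.congr_deriv ?_
  ring

lemma f_injective (c : ℝ) (hc : 0 < c) :
    Function.Injective (fun y => (1 + Real.tanh (c*y))/2) := by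
  intro u v h
  simp only at h
  have : Real.tanh (c*u) = Real.tanh (c*v) := by linarith
  have := tanh_strictMono.injective this
  exact mul_left_cancel₀ hc.ne' this

lemma gbeta_integral (a : ℝ) (ha : a ≠ 0) :
    ∫ x in Set.Ioo (0:ℝ) 1, gbeta a x
      = Complex.I * (↑(a^2) * ↑Real.pi / ↑(Real.sinh (Real.pi * a))) := by
  have hcongr : ∀ x ∈ Set.Ioo (0:ℝ) 1, gbeta a x
      = 2 * ((x:ℂ) ^ ((2 + ↑a*Complex.I) - 1) * ((1:ℂ) - ↑x) ^ ((1 - ↑a*Complex.I) - 1))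
        - ((x:ℂ) ^ ((1 + ↑a*Complex.I) - 1) * ((1:ℂ) - ↑x) ^ ((1 - ↑a*Complex.I) - 1)) := by
    rintro x ⟨hx0, hx1⟩
    have hcx : ((x:ℝ):ℂ) ≠ 0 := by exact_mod_cast hx0.ne'
    have e1 : ((2:ℂ) + ↑a*Complex.I) - 1 = 1 + ↑a*Complex.I := by ring
    have e2 : ((1:ℂ) - ↑a*Complex.I) - 1 = -(↑a*Complex.I) := by ring
    have e3 : ((1:ℂ) + ↑a*Complex.I) - 1 = ↑a*Complex.I := by ring
    rw [e1, e2, e3, Complex.cpow_add _ _ hcx, Complex.cpow_one]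
    rw [gbeta]
    ring
  rw [setIntegral_congr_fun measurableSet_Ioo hcongr,
    ← MeasureTheory.integral_Ioc_eq_integral_Ioo,
    ← intervalIntegral.integral_of_le (zero_le_one)]
  have hre1 : (0:ℝ) < ((2:ℂ) + ↑a*Complex.I).re := by simp
  have hre2 : (0:ℝ) < ((1:ℂ) - ↑a*Complex.I).re := by simp
  have hre3 : (0:ℝ) < ((1:ℂ) + ↑a*Complex.I).re := by simp
  have hint1 := Complex.betaIntegral_convergent hre1 hre2
  have hint3 := Complex.betaIntegral_convergent hre3 hre2
  rw [intervalIntegral.integral_sub (hint1.const_mul 2) hint3,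
    intervalIntegral.integral_const_mul]
  rw [show (∫ x in (0:ℝ)..1, (x:ℂ) ^ ((2 + ↑a*Complex.I) - 1)
        * ((1:ℂ) - ↑x) ^ ((1 - ↑a*Complex.I) - 1))
      = Complex.betaIntegral (2 + ↑a*Complex.I) (1 - ↑a*Complex.I) from rfl,
    show (∫ x in (0:ℝ)..1, (x:ℂ) ^ ((1 + ↑a*Complex.I) - 1)
        * ((1:ℂ) - ↑x) ^ ((1 - ↑a*Complex.I) - 1))
      = Complex.betaIntegral (1 + ↑a*Complex.I) (1 - ↑a*Complex.I) from rfl]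
  exact beta_combo a ha

lemma key_integral (c a : ℝ) (hc : 0 < c) (ha : a ≠ 0) :
    ∫ y : ℝ, Complex.exp (↑(2*c*a*y) * Complex.I) * ↑(Real.tanh (c*y))
        * ((1 / Real.cosh (c*y) ^ 2 : ℝ) : ℂ)
      = Complex.I * ((2 * Real.pi * a^2 / (c * Real.sinh (Real.pi * a)) : ℝ) : ℂ) := by
  set f : ℝ → ℝ := fun y => (1 + Real.tanh (c*y))/2 with hf
  have hCoV := integral_image_eq_integral_abs_deriv_smul
    MeasurableSet.univ
    (fun x _ => (f_hasDerivAt c x).hasDerivWithinAt)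
    ((f_injective c hc).injOn) (gbeta a)
  rw [Set.image_univ, range_f hc.ne', Measure.restrict_univ] at hCoV
  -- pointwise simplification of the RHS of hCoV
  have hpt : ∀ y : ℝ, |c/2 * (1 / Real.cosh (c*y) ^ 2)| • gbeta a ((1 + Real.tanh (c*y))/2)
      = (c/2 : ℝ) • (Complex.exp (↑(2*c*a*y) * Complex.I) * ↑(Real.tanh (c*y))
          * ((1 / Real.cosh (c*y) ^ 2 : ℝ) : ℂ)) := by
    intro y
    have habs : |c/2 * (1 / Real.cosh (c*y) ^ 2)| = c/2 * (1 / Real.cosh (c*y) ^ 2) := by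
      rw [abs_of_nonneg]
      positivity
    rw [habs, g_comp c a y hc, Complex.real_smul, Complex.real_smul]
    push_cast
    ring
  simp_rw [hpt, integral_smul] at hCoV
  have hgb : ∫ x in Set.Ioo (0:ℝ) 1, gbeta a x
      = Complex.I * (↑(a^2) * ↑Real.pi / ↑(Real.sinh (Real.pi * a))) := gbeta_integral a ha
  rw [hgb] at hCoV
  have hc2 : (c/2 : ℝ) ≠ 0 := by positivity
  have hKey : (2/c : ℝ) • ((c/2 : ℝ) • (∫ y : ℝ, Complex.exp (↑(2*c*a*y) * Complex.I)
        * ↑(Real.tanh (c*y)) * ((1 / Real.cosh (c*y) ^ 2 : ℝ) : ℂ)))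
      = ∫ y : ℝ, Complex.exp (↑(2*c*a*y) * Complex.I) * ↑(Real.tanh (c*y))
        * ((1 / Real.cosh (c*y) ^ 2 : ℝ) : ℂ) := by
    rw [smul_smul, show (2/c) * (c/2) = (1:ℝ) by field_simp, one_smul]
  rw [← hKey, ← hCoV, Complex.real_smul]
  have hs : ((Real.sinh (Real.pi * a) : ℝ) : ℂ) ≠ 0 := by
    exact_mod_cast Complex.ofReal_ne_zero.mpr (by
      rw [Real.sinh_ne_zero]; exact mul_ne_zero Real.pi_ne_zero ha)
  have hcc : ((c:ℝ):ℂ) ≠ 0 := by exact_mod_cast hc.ne'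
  push_cast
  field_simp


lemma continuous_tanh' : Continuous Real.tanh := by
  rw [funext Real.tanh_eq_sinh_div_cosh]
  exact Real.continuous_sinh.div Real.continuous_cosh fun x => (Real.cosh_pos x).ne'

lemma F_integrable (c a : ℝ) (hc : 1/2 ≤ c) :
    Integrable (fun y : ℝ => Complex.exp (↑(2*c*a*y) * Complex.I) * ↑(Real.tanh (c*y))
        * ((1 / Real.cosh (c*y) ^ 2 : ℝ) : ℂ)) := by
  apply Integrable.mono' ((integrable_inv_one_add_sq).const_mul 16)
  · apply Continuous.aestronglyMeasurable
    apply Continuous.mul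
    · apply Continuous.mul
      · exact Complex.continuous_exp.comp (by fun_prop)
      · exact Complex.continuous_ofReal.comp
          (continuous_tanh'.comp (continuous_const.mul continuous_id))
    · exact Complex.continuous_ofReal.comp (by
        apply Continuous.div continuous_const
        · fun_prop
        · intro x; positivity)
  · filter_upwards with y
    have h1 : ‖Complex.exp (↑(2*c*a*y) * Complex.I)‖ = 1 := by
      simp [Complex.norm_exp]
    have h2 : |Real.tanh (c*y)| ≤ 1 := by
      rw [abs_le]
      exact ⟨(neg_one_lt_tanh' _).le, (tanh_lt_one' _).le⟩
    have h3 : (0:ℝ) ≤ 1 / Real.cosh (c*y) ^ 2 := by positivity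
    rw [norm_mul, norm_mul, h1, one_mul, Complex.norm_real, Complex.norm_real,
      Real.norm_eq_abs, Real.norm_eq_abs, abs_of_nonneg h3]
    calc |Real.tanh (c*y)| * (1 / Real.cosh (c*y) ^ 2)
        ≤ 1 * (16 * (1 + y^2)⁻¹) :=
          mul_le_mul h2 (sech_sq_le hc y) h3 (by norm_num)
      _ = 16 * (1 + y^2)⁻¹ := by ring

lemma re_exp_mul (u r : ℝ) : (Complex.exp (↑u * Complex.I) * ↑r).re = Real.cos u * r := by
  rw [Complex.mul_re, Complex.exp_ofReal_mul_I_re, Complex.exp_ofReal_mul_I_im]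
  simp

lemma re_exp_mul_I_mul (θ M : ℝ) :
    (Complex.exp (↑θ * Complex.I) * (Complex.I * ↑M)).re = -(Real.sin θ) * M := by
  simp [Complex.mul_re, Complex.mul_im, Complex.exp_ofReal_mul_I_re,
    Complex.exp_ofReal_mul_I_im]

lemma real_key (c a θ : ℝ) (hc2 : 1/2 ≤ c) (hc : 0 < c) (ha : a ≠ 0) :
    ∫ y : ℝ, Real.cos (2*c*a*y + θ) * Real.tanh (c*y) * (1 / Real.cosh (c*y) ^ 2)
      = -(2 * Real.pi * a^2 / (c * Real.sinh (Real.pi * a))) * Real.sin θ := by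
  set F : ℝ → ℂ := fun y => Complex.exp (↑(2*c*a*y) * Complex.I) * ↑(Real.tanh (c*y))
        * ((1 / Real.cosh (c*y) ^ 2 : ℝ) : ℂ) with hF
  have hInt : Integrable F := F_integrable c a hc2
  have hpt : ∀ y : ℝ, Real.cos (2*c*a*y + θ) * Real.tanh (c*y) * (1 / Real.cosh (c*y) ^ 2)
      = ((Complex.exp (↑θ * Complex.I) * F y).re) := by
    intro y
    rw [hF]
    have step : Complex.exp (↑θ * Complex.I) * (Complex.exp (↑(2*c*a*y) * Complex.I)
        * ↑(Real.tanh (c*y)) * ((1 / Real.cosh (c*y) ^ 2 : ℝ) : ℂ))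
        = Complex.exp (↑(2*c*a*y + θ) * Complex.I)
          * ((Real.tanh (c*y) * (1 / Real.cosh (c*y) ^ 2) : ℝ) : ℂ) := by
      rw [show Complex.exp (↑θ * Complex.I) * (Complex.exp (↑(2*c*a*y) * Complex.I)
          * ↑(Real.tanh (c*y)) * ((1 / Real.cosh (c*y) ^ 2 : ℝ) : ℂ))
          = (Complex.exp (↑θ * Complex.I) * Complex.exp (↑(2*c*a*y) * Complex.I))
            * (↑(Real.tanh (c*y)) * ((1 / Real.cosh (c*y) ^ 2 : ℝ) : ℂ)) by ring,
        ← Complex.exp_add]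
      congr 1
      · congr 1
        push_cast
        ring
      · push_cast
        ring
    rw [step, re_exp_mul]
    ring
  simp_rw [hpt]
  have hcomm := (Complex.reCLM.integral_comp_comm (hInt.const_mul (Complex.exp (↑θ * Complex.I))))
  simp only [Complex.reCLM_apply] at hcomm
  rw [hcomm, MeasureTheory.integral_const_mul, key_integral c a hc ha, re_exp_mul_I_mul]
  ring

/-- With `f₁(x) = α₁ cos(kx)`, `f₂ ≡ f₃ ≡ 0` and `k ≠ 0`, the Melnikov integral
`R_up(φ) = ∫ α₁ cos(kx) u_up(x;φ) u_up'(x;φ) dx` equals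
`−(α₁ k² π / sinh(kπ/√2)) sin(kφ)`; for `α₁ ≠ 0` it vanishes precisely when `kφ`
is an integer multiple of `π`. -/
theorem melnikov_periodic_example (α₁ k : ℝ) (hk : k ≠ 0) :
    (∀ φ : ℝ,
      (∫ x : ℝ, α₁ * Real.cos (k * x) * Real.tanh (Real.sqrt 2 / 2 * (x - φ))
          * deriv (fun x : ℝ => Real.tanh (Real.sqrt 2 / 2 * (x - φ))) x)
        = -(α₁ * k ^ 2 * Real.pi) / Real.sinh (k * Real.pi / Real.sqrt 2)
            * Real.sin (k * φ)) ∧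
    (α₁ ≠ 0 → ∀ φ : ℝ,
      ((∫ x : ℝ, α₁ * Real.cos (k * x) * Real.tanh (Real.sqrt 2 / 2 * (x - φ))
          * deriv (fun x : ℝ => Real.tanh (Real.sqrt 2 / 2 * (x - φ))) x) = 0
        ↔ ∃ n : ℤ, k * φ = n * Real.pi)) := by
  have hs2 : (0:ℝ) < Real.sqrt 2 := Real.sqrt_pos.mpr (by norm_num)
  have hs2sq : Real.sqrt 2 * Real.sqrt 2 = 2 := Real.mul_self_sqrt (by norm_num)
  have hs21 : (1:ℝ) ≤ Real.sqrt 2 := by nlinarith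
  set c : ℝ := Real.sqrt 2 / 2 with hcdef
  have hc0 : 0 < c := by positivity
  have hc2 : 1/2 ≤ c := by rw [hcdef]; linarith
  set a : ℝ := k / Real.sqrt 2 with hadef
  have ha : a ≠ 0 := div_ne_zero hk hs2.ne'
  have h2ca : 2*c*a = k := by
    rw [hcdef, hadef]
    field_simp
  have hsinh0 : Real.sinh (Real.pi * a) ≠ 0 := by
    rw [Real.sinh_ne_zero]
    exact mul_ne_zero Real.pi_ne_zero ha
  have hmain : ∀ φ : ℝ,
      (∫ x : ℝ, α₁ * Real.cos (k * x) * Real.tanh (Real.sqrt 2 / 2 * (x - φ))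
          * deriv (fun x : ℝ => Real.tanh (Real.sqrt 2 / 2 * (x - φ))) x)
        = -(α₁ * k ^ 2 * Real.pi) / Real.sinh (k * Real.pi / Real.sqrt 2)
            * Real.sin (k * φ) := by
    intro φ
    have hderiv : ∀ x : ℝ, deriv (fun x : ℝ => Real.tanh (Real.sqrt 2 / 2 * (x - φ))) x
        = 1 / Real.cosh (c * (x - φ)) ^ 2 * (c * 1) := by
      intro x
      exact ((tanh_hasDerivAt_s11 (c * (x - φ))).comp x
        (((hasDerivAt_id x).sub_const φ).const_mul c)).deriv
    set G : ℝ → ℝ := fun y => (α₁ * c) *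
      (Real.cos (2*c*a*y + k*φ) * Real.tanh (c*y) * (1 / Real.cosh (c*y) ^ 2)) with hG
    have h1 : ∀ x : ℝ, α₁ * Real.cos (k * x) * Real.tanh (Real.sqrt 2 / 2 * (x - φ))
        * deriv (fun x : ℝ => Real.tanh (Real.sqrt 2 / 2 * (x - φ))) x = G (x - φ) := by
      intro x
      rw [hderiv x, hG]
      simp only
      rw [show 2*c*a*(x-φ) + k*φ = k*x by rw [h2ca]; ring]
      rw [hcdef]
      ring
    simp_rw [h1, sub_eq_add_neg]
    rw [MeasureTheory.integral_add_right_eq_self G (-φ), hG]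
    simp only
    rw [MeasureTheory.integral_const_mul, real_key c a (k*φ) hc2 hc0 ha]
    rw [show k * Real.pi / Real.sqrt 2 = Real.pi * a by rw [hadef]; ring]
    have ha2 : a^2 = k^2/2 := by
      rw [hadef, div_pow, Real.sq_sqrt (by norm_num : (0:ℝ) ≤ 2)]
    field_simp
    have hinv : (Real.sqrt 2)⁻¹ ^ 2 = 1/2 := by
      rw [← one_div, div_pow, one_pow, Real.sq_sqrt (by norm_num : (0:ℝ) ≤ 2)]
    linear_combination (-(α₁ * 2 * Real.sin (k*φ))) * ha2
  refine ⟨hmain, fun hα φ => ?_⟩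
  rw [hmain φ]
  have hcoef : -(α₁ * k ^ 2 * Real.pi) / Real.sinh (k * Real.pi / Real.sqrt 2) ≠ 0 := by
    apply div_ne_zero
    · simp only [neg_ne_zero]
      exact mul_ne_zero (mul_ne_zero hα (pow_ne_zero 2 hk)) Real.pi_ne_zero
    · rw [show k * Real.pi / Real.sqrt 2 = Real.pi * a by rw [hadef]; ring]
      exact hsinh0
  rw [mul_eq_zero, or_iff_right hcoef, Real.sin_eq_zero_iff]
  constructor
  · rintro ⟨n, hn⟩; exact ⟨n, hn.symm⟩
  · rintro ⟨n, hn⟩; exact ⟨n, hn.symm⟩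
end
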